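/- Let q ≥ 2, let n,m,k,k' ∈ ℕ with k ≤ k', let D be a probability distribution on (ZMod q)^{n×k'}, let φ : [k] → [k'] be an injection, let Y be a one-wise uniform distribution on (ZMod q)^k, let M ∈ PHM(m,k,n), and let B ⊆ (ZMod q)^{m×k} satisfy p := Pr_{X∼D, Y∼Y^{⊗m}}[Π^φ_M X − Y ∈ B] > 0; set ν := (|B|/q^{m·k})/p. Then for every h ∈ ℕ: Σ_{W ∈ (ZMod q)^{n×k'} : wt(W) = h} |μ̂_{Post(D;M,B)}(W)| ≤ ν · Σ_{V ∈ (ZMod q)^{n×k'}} |μ̂_D(V)| · Σ_{U} |μ̂_B(U)|, where the inner sum ranges over all singleton-free U ∈ (ZMod q)^{m×k} with wt(U + Π^φ_M V) = h − (wt(V) − wt(Π^φ_M V)). -/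

import Mathlib

open Finset

noncomputable section

attribute [local instance] Classical.propDecidable

/-- A probability distribution on a finite set, given by its mass function. -/
def IsDist {S : Type*} [Fintype S] (D : S → ℝ) : Prop :=
  (∀ x, 0 ≤ D x) ∧ ∑ x, D x = 1

/-- The density function of a distribution: probability times cardinality. -/
def densityFn {S : Type*} [Fintype S] (D : S → ℝ) (x : S) : ℝ :=
  (Fintype.card S : ℝ) * D x

/-- `ω = exp(2πi/q)`. -/
def omegaQ (q : ℕ) : ℂ := Complex.exp (2 * Real.pi * Complex.I / q)

/-- Fourier coefficient of `g : (ZMod q)^I → ℂ` at frequency `u`. -/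
def fcoef {q : ℕ} [NeZero q] {I : Type*} [Fintype I] [DecidableEq I]
    (g : (I → ZMod q) → ℂ) (u : I → ZMod q) : ℂ :=
  (∑ x : I → ZMod q, g x * omegaQ q ^ (-((∑ i, u i * x i : ZMod q).val : ℤ))) /
    (Fintype.card (I → ZMod q) : ℂ)

/-- Fourier coefficient of the density of a distribution. -/
def fourierDensity {q : ℕ} [NeZero q] {I : Type*} [Fintype I] [DecidableEq I]
    (D : (I → ZMod q) → ℝ) (u : I → ZMod q) : ℂ :=
  fcoef (fun x => ((densityFn D x : ℝ) : ℂ)) u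

/-- Number of nonzero coordinates. -/
def wt {q : ℕ} {I : Type*} [Fintype I] (u : I → ZMod q) : ℕ :=
  (univ.filter fun i => u i ≠ 0).card

/-- One-wise uniformity: each coordinate marginal is uniform. -/
def OneWise {q : ℕ} [NeZero q] {I : Type*} [Fintype I] [DecidableEq I]
    (Y : (I → ZMod q) → ℝ) : Prop :=
  ∀ (j : I) (b : ZMod q), (∑ y : I → ZMod q, if y j = b then Y y else 0) = 1 / q

/-- Row `j` of a matrix. -/
def mrow {q m k : ℕ} (U : Fin m × Fin k → ZMod q) (j : Fin m) : Fin k → ZMod q :=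
  fun ℓ => U (j, ℓ)

/-- A matrix is singleton-free if no row has exactly one nonzero entry. -/
def SingletonFree {q m k : ℕ} (U : Fin m × Fin k → ZMod q) : Prop :=
  ∀ j : Fin m, (univ.filter fun ℓ => U (j, ℓ) ≠ 0).card ≠ 1

/-- Row weight: number of nonzero rows. -/
def rwt {q m k : ℕ} (U : Fin m × Fin k → ZMod q) : ℕ :=
  (univ.filter fun j : Fin m => mrow U j ≠ 0).card

/-- Product distribution `Y^{⊗m}`: one independent sample of `Y` per row. -/
def prodRows {q m k : ℕ} (Y : (Fin k → ZMod q) → ℝ) (Z : Fin m × Fin k → ZMod q) : ℝ :=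
  ∏ j : Fin m, Y (mrow Z j)

/-- `k`-partite hypermatchings: each column has pairwise distinct entries. -/
def PHMset (m k n : ℕ) : Finset (Fin m → Fin k → Fin n) :=
  univ.filter fun M => ∀ ℓ : Fin k, Function.Injective fun j => M j ℓ

/-- The projection `Π^φ_M`. -/
def projMap {q m k n k' : ℕ} (φ : Fin k → Fin k') (M : Fin m → Fin k → Fin n)
    (X : Fin n × Fin k' → ZMod q) : Fin m × Fin k → ZMod q :=
  fun p => X (M p.1 p.2, φ p.2)

/-- The distribution of `Π^φ_M X − Y` for `X ∼ D` and `Y ∼ Y^{⊗m}` independent. -/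
def inputDist {q m k n k' : ℕ} [NeZero q] (D : (Fin n × Fin k' → ZMod q) → ℝ)
    (Y : (Fin k → ZMod q) → ℝ) (φ : Fin k → Fin k') (M : Fin m → Fin k → Fin n) :
    (Fin m × Fin k → ZMod q) → ℝ :=
  fun Z => ∑ X : Fin n × Fin k' → ZMod q, D X * prodRows Y (projMap φ M X - Z)

/-- Normalized 1-norm (expectation of absolute value). -/
def norm1 {S : Type*} [Fintype S] (g : S → ℂ) : ℝ :=
  (∑ x, ‖g x‖) / (Fintype.card S : ℝ)

/-- Sup-norm. -/
def normInf {S : Type*} [Fintype S] (g : S → ℂ) : ℝ := ⨆ x, ‖g x‖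

/-- Square of the normalized 2-norm. -/
def norm2sq {S : Type*} [Fintype S] (g : S → ℂ) : ℝ :=
  (∑ x, ‖g x‖ ^ 2) / (Fintype.card S : ℝ)

/-- The Fourier bound function `U_{C,s}(h; N)`. -/
def UBound (q : ℕ) (C : ℝ) (s h N : ℕ) : ℝ :=
  if h = 0 then 1
  else if h ≤ s then (C * Real.sqrt ((s : ℝ) * N) / h) ^ ((h : ℝ) / 2)
  else min ((C * Real.sqrt (N : ℝ) / Real.sqrt (h : ℝ)) ^ ((h : ℝ) / 2))
       ((Real.exp 1 * (q : ℝ) ^ 2 * N / h) ^ ((h : ℝ) / 2))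

/-- `(C,s)`-boundedness of a distribution. -/
def IsBounded (q : ℕ) [NeZero q] {I : Type*} [Fintype I] [DecidableEq I] (C : ℝ) (s : ℕ)
    (D : (I → ZMod q) → ℝ) : Prop :=
  ∀ h : ℕ, 1 ≤ h → h ≤ Fintype.card I →
    ∑ u ∈ univ.filter (fun u : I → ZMod q => wt u = h), ‖fourierDensity D u‖
      ≤ UBound q C s h (Fintype.card I)

/-- The probability of the conditioning event `Π^φ_M X − Y ∈ B` for independent
`X ∼ D` and `Y ∼ Y^{⊗m}`. -/
def pSucc {q m k n k' : ℕ} [NeZero q] (D : (Fin n × Fin k' → ZMod q) → ℝ)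
    (Y : (Fin k → ZMod q) → ℝ) (φ : Fin k → Fin k') (M : Fin m → Fin k → Fin n)
    (B : Finset (Fin m × Fin k → ZMod q)) : ℝ :=
  ∑ X : Fin n × Fin k' → ZMod q, ∑ Yv : Fin m × Fin k → ZMod q,
    (if projMap φ M X - Yv ∈ B then D X * prodRows Y Yv else 0)

/-- The posterior distribution `Post(D; M, B)`. -/
def postDist {q m k n k' : ℕ} [NeZero q] (D : (Fin n × Fin k' → ZMod q) → ℝ)
    (Y : (Fin k → ZMod q) → ℝ) (φ : Fin k → Fin k') (M : Fin m → Fin k → Fin n)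
    (B : Finset (Fin m × Fin k → ZMod q)) : (Fin n × Fin k' → ZMod q) → ℝ :=
  fun X₀ => D X₀ *
    (∑ Yv : Fin m × Fin k → ZMod q,
      (if projMap φ M X₀ - Yv ∈ B then prodRows Y Yv else 0)) / pSucc D Y φ M B

/-- The uniform distribution on a subset `B`. -/
def unifOn {S : Type*} [Fintype S] (B : Finset S) : S → ℝ :=
  fun x => if x ∈ B then 1 / (B.card : ℝ) else 0

/-!
Expanding the indicator of `B` into characters turns the Fourier coefficient at `W` of the
unnormalised posterior density into
`(|B| / q^{mk}) · Σ_U μ̂_B(U) · μ̂_{Y^{⊗m}}(U) · μ̂_D(W − Πᵀ U)`,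
where `Πᵀ`, extension by zero along the injective index map `(j, ℓ) ↦ (M j ℓ, φ ℓ)`, is the
adjoint of `Π^φ_M`. The noise factor has modulus at most one and factors over the rows; by
one-wise uniformity a row with exactly one nonzero entry kills it, so only singleton-free `U`
survive. Summing over `wt W = h` and substituting `W = V + Πᵀ U`, the weight bookkeeping is
`wt (V + Πᵀ U) = wt (U + Π V) + wt V − wt (Π V)`, as `V + Πᵀ U` and `V` differ only on the image
of the index map.
-/

open Function Matrix

lemma AddChar.map_sum_eq_prod {ι A M : Type*} [AddCommMonoid A] [CommMonoid M]
    (ψ : AddChar A M) (s : Finset ι) (f : ι → A) :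
    ψ (∑ i ∈ s, f i) = ∏ i ∈ s, ψ (f i) := by
  induction s using Finset.cons_induction with
  | empty => simp
  | cons a s ha ih => rw [sum_cons, prod_cons, ψ.map_add_eq_mul, ih]

section Fourier

variable {q : ℕ} [NeZero q] {I : Type*} [Fintype I] [DecidableEq I]

lemma omegaQ_zpow_neg_val (a : ZMod q) :
    omegaQ q ^ (-(a.val : ℤ)) = ZMod.stdAddChar (-a) := by
  have ha : -a = ((-(a.val : ℤ) : ℤ) : ZMod q) := by simp
  rw [ha, ZMod.stdAddChar_coe, omegaQ, ← Complex.exp_int_mul]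
  ring_nf

lemma fourierDensity_eq_sum (D : (I → ZMod q) → ℝ) (u : I → ZMod q) :
    fourierDensity D u = ∑ x, (D x : ℂ) * ZMod.stdAddChar (-(u ⬝ᵥ x)) := by
  have hcard : (Fintype.card (I → ZMod q) : ℂ) ≠ 0 := Nat.cast_ne_zero.mpr Fintype.card_ne_zero
  simp only [fourierDensity, fcoef, densityFn, omegaQ_zpow_neg_val, dotProduct, sum_div]
  refine sum_congr rfl fun x _ => ?_
  push_cast
  field_simp

lemma fourierDensity_div_const (D : (I → ZMod q) → ℝ) (c : ℝ) (u : I → ZMod q) :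
    fourierDensity (fun x => D x / c) u = fourierDensity D u / c := by
  simp only [fourierDensity_eq_sum, sum_div, Complex.ofReal_div, div_mul_eq_mul_div]

lemma sum_stdAddChar_dotProduct (A : I → ZMod q) :
    ∑ u : I → ZMod q, ZMod.stdAddChar (u ⬝ᵥ A)
      = if A = 0 then (Fintype.card (I → ZMod q) : ℂ) else 0 := by
  let χ : AddChar (I → ZMod q) ℂ :=
    ZMod.stdAddChar.compAddMonoidHom (AddMonoidHom.mk' (· ⬝ᵥ A) fun u v => add_dotProduct u v A)
  have hχ : χ = 0 ↔ A = 0 := by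
    refine ⟨fun h => funext fun i => ?_, fun h => ?_⟩
    · have h1 : ZMod.stdAddChar (A i) = 1 := by
        simpa [χ, single_dotProduct] using DFunLike.congr_fun h (Pi.single i 1)
      exact ZMod.injective_stdAddChar (h1.trans (AddChar.map_zero_eq_one _).symm)
    · ext u
      simp [χ, h]
  calc ∑ u, ZMod.stdAddChar (u ⬝ᵥ A) = ∑ u, χ u := rfl
    _ = _ := by rw [AddChar.sum_eq_ite]; simp only [hχ]

lemma densityFn_eq_sum_fourierDensity (D : (I → ZMod q) → ℝ) (x : I → ZMod q) :
    (densityFn D x : ℂ) = ∑ u, fourierDensity D u * ZMod.stdAddChar (u ⬝ᵥ x) := by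
  simp_rw [fourierDensity_eq_sum, sum_mul]
  rw [sum_comm]
  have hchar : ∀ u y : I → ZMod q, (D y : ℂ) * ZMod.stdAddChar (-(u ⬝ᵥ y)) *
      ZMod.stdAddChar (u ⬝ᵥ x) = D y * ZMod.stdAddChar (u ⬝ᵥ (x - y)) := by
    intro u y
    rw [mul_assoc, ← AddChar.map_add_eq_mul, dotProduct_sub, neg_add_eq_sub]
  simp_rw [hchar, ← mul_sum, sum_stdAddChar_dotProduct, sub_eq_zero, mul_ite, mul_zero,
    Fintype.sum_ite_eq, densityFn]
  push_cast
  ring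

lemma norm_fourierDensity_le_one {D : (I → ZMod q) → ℝ} (hD : IsDist D) (u : I → ZMod q) :
    ‖fourierDensity D u‖ ≤ 1 := by
  rw [fourierDensity_eq_sum, ← hD.2]
  refine (norm_sum_le _ _).trans_eq (sum_congr rfl fun x _ => ?_)
  rw [norm_mul, AddChar.norm_apply, mul_one, Complex.norm_real, Real.norm_of_nonneg (hD.1 x)]

end Fourier

lemma eq_single_of_wt_eq_one {q : ℕ} {I : Type*} [Fintype I] [DecidableEq I] {u : I → ZMod q}
    (hu : wt u = 1) : ∃ ℓ, u = Pi.single ℓ (u ℓ) := by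
  obtain ⟨ℓ, hℓ⟩ := card_eq_one.mp hu
  refine ⟨ℓ, funext fun i => ?_⟩
  by_cases hi : i = ℓ
  · subst hi; simp
  · have : i ∉ univ.filter fun i => u i ≠ 0 := by rw [hℓ]; simpa using hi
    simpa [hi] using this

section OneWise

variable {q : ℕ} [NeZero q] {I : Type*} [Fintype I] [DecidableEq I]

lemma fourierDensity_eq_zero_of_wt_eq_one {Y : (I → ZMod q) → ℝ} (hY : OneWise Y)
    {u : I → ZMod q} (hu : wt u = 1) : fourierDensity Y u = 0 := by
  obtain ⟨ℓ, hℓ⟩ := eq_single_of_wt_eq_one hu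
  have hc : u ℓ ≠ 0 := by
    intro h0
    rw [h0, Pi.single_zero] at hℓ
    simp [hℓ, wt] at hu
  have hmarginal : ∀ b, ∑ y : I → ZMod q, (if y ℓ = b then (Y y : ℂ) else 0) = 1 / q := by
    intro b
    simpa [apply_ite] using congrArg (fun r : ℝ => (r : ℂ)) (hY ℓ b)
  have hdot : ∀ y : I → ZMod q, u ⬝ᵥ y = u ℓ * y ℓ := fun y => by
    conv_lhs => rw [hℓ]
    exact single_dotProduct y (u ℓ) ℓ
  calc fourierDensity Y u
      = ∑ b : ZMod q, ∑ y : I → ZMod q,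
          if y ℓ = b then (Y y : ℂ) * ZMod.stdAddChar (b * -u ℓ) else 0 := by
        rw [fourierDensity_eq_sum, sum_comm]
        refine sum_congr rfl fun y _ => ?_
        rw [Fintype.sum_ite_eq, hdot, mul_neg, mul_comm (y ℓ)]
    _ = ∑ b : ZMod q, ZMod.stdAddChar (b * -u ℓ) / q := by
        refine sum_congr rfl fun b _ => ?_
        simp_rw [← ite_zero_mul, ← sum_mul, hmarginal]
        ring
    _ = 0 := by
        rw [← sum_div, AddChar.sum_mulShift _ (ZMod.isPrimitive_stdAddChar q),
          if_neg (neg_ne_zero.mpr hc), Nat.cast_zero, zero_div]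

end OneWise

lemma dotProduct_eq_sum_mrow {q m k : ℕ} (U Z : Fin m × Fin k → ZMod q) :
    U ⬝ᵥ Z = ∑ j, mrow U j ⬝ᵥ mrow Z j :=
  Fintype.sum_prod_type _

section ProductNoise

variable {q m k : ℕ} [NeZero q]

lemma fourierDensity_prodRows (Y : (Fin k → ZMod q) → ℝ) (U : Fin m × Fin k → ZMod q) :
    fourierDensity (prodRows Y) U = ∏ j, fourierDensity Y (mrow U j) := by
  simp_rw [fourierDensity_eq_sum, Fintype.prod_sum]
  refine Fintype.sum_equiv (Equiv.curry (Fin m) (Fin k) (ZMod q)) _ _ fun Z => ?_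
  rw [prod_mul_distrib, ← AddChar.map_sum_eq_prod, sum_neg_distrib, dotProduct_eq_sum_mrow]
  simp only [prodRows, Complex.ofReal_prod]
  rfl

lemma norm_fourierDensity_prodRows_le_one {Y : (Fin k → ZMod q) → ℝ} (hY : IsDist Y)
    (U : Fin m × Fin k → ZMod q) : ‖fourierDensity (prodRows Y) U‖ ≤ 1 := by
  rw [fourierDensity_prodRows, norm_prod]
  exact prod_le_one (fun _ _ => norm_nonneg _) fun j _ => norm_fourierDensity_le_one hY _

lemma fourierDensity_prodRows_eq_zero {Y : (Fin k → ZMod q) → ℝ} (hY : OneWise Y)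
    {U : Fin m × Fin k → ZMod q} (hU : ¬ SingletonFree U) : fourierDensity (prodRows Y) U = 0 := by
  obtain ⟨j, hj⟩ := not_forall.mp hU
  rw [fourierDensity_prodRows]
  exact prod_eq_zero (mem_univ j) (fourierDensity_eq_zero_of_wt_eq_one hY (not_not.mp hj))

end ProductNoise

section Extend

variable {I J : Type*} [Fintype I] [Fintype J] {e : J → I}

lemma extend_zero_dotProduct {R : Type*} [NonUnitalNonAssocSemiring R] (he : Injective e)
    (U : J → R) (X : I → R) : extend e U 0 ⬝ᵥ X = U ⬝ᵥ (X ∘ e) :=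
  (Fintype.sum_of_injective e he _ _
    (fun i hi => by rw [extend_apply' _ _ _ (by simpa using hi), Pi.zero_apply, zero_mul])
    (fun j => by rw [he.extend_apply]; rfl)).symm

lemma wt_add_extend_zero {q : ℕ} (he : Injective e) (V : I → ZMod q) (U : J → ZMod q) :
    wt (V + extend e U 0) + wt (V ∘ e) = wt (U + V ∘ e) + wt V := by
  -- Off the range of `e` the vectors `V + extend e U 0` and `V` agree.
  have key : ∑ j, ((if (U + V ∘ e) j ≠ 0 then 1 else 0) - (if (V ∘ e) j ≠ 0 then 1 else 0) : ℤ)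
      = ∑ i, ((if (V + extend e U 0) i ≠ 0 then 1 else 0) - if V i ≠ 0 then 1 else 0) :=
    Fintype.sum_of_injective e he _ _
      (fun i hi => by
        rw [Pi.add_apply, extend_apply' _ _ _ (by simpa using hi), Pi.zero_apply, add_zero,
          sub_self])
      (fun j => by simp only [Pi.add_apply, Function.comp_apply, he.extend_apply, add_comm (U j)])
  simp only [sum_sub_distrib, ← natCast_card_filter] at key
  unfold wt
  omega

lemma stdAddChar_projection_mul {q : ℕ} [NeZero q] (he : Injective e) (U Z : J → ZMod q)
    (W X : I → ZMod q) :
    ZMod.stdAddChar (U ⬝ᵥ (X ∘ e - Z)) * ZMod.stdAddChar (-(W ⬝ᵥ X))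
      = ZMod.stdAddChar (-(U ⬝ᵥ Z)) * ZMod.stdAddChar (-((W - extend e U 0) ⬝ᵥ X)) := by
  rw [← AddChar.map_add_eq_mul, ← AddChar.map_add_eq_mul, dotProduct_sub, sub_dotProduct,
    extend_zero_dotProduct he]
  congr 1
  ring

end Extend

lemma sum_wt_eq_sum_mul_sub_extend_zero {q : ℕ} [NeZero q] {I J : Type*} [Fintype I]
    [Fintype J] [DecidableEq I] [DecidableEq J] {e : J → I} (he : Injective e)
    (P : (J → ZMod q) → Prop) (F : (J → ZMod q) → ℝ) (G : (I → ZMod q) → ℝ) (h : ℕ) :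
    ∑ W ∈ univ.filter (fun W : I → ZMod q => wt W = h), ∑ U ∈ univ.filter P,
        F U * G (W - extend e U 0)
      = ∑ V : I → ZMod q, G V * ∑ U ∈ univ.filter (fun U => P U ∧
          (wt (U + V ∘ e) : ℤ) = h - ((wt V : ℤ) - wt (V ∘ e))), F U := by
  have hshift : ∀ U : J → ZMod q,
      ∑ W ∈ univ.filter (fun W : I → ZMod q => wt W = h), F U * G (W - extend e U 0)
        = ∑ V : I → ZMod q, if wt (V + extend e U 0) = h then F U * G V else 0 := by
    intro U
    rw [sum_filter]
    exact (Fintype.sum_equiv (Equiv.addRight (extend e U 0)) _ _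
      fun V => by simp only [Equiv.coe_addRight, add_sub_cancel_right]).symm
  have hwt : ∀ (U : J → ZMod q) (V : I → ZMod q), wt (V + extend e U 0) = h ↔
      (wt (U + V ∘ e) : ℤ) = h - ((wt V : ℤ) - wt (V ∘ e)) := by
    intro U V
    have := wt_add_extend_zero he V U
    omega
  rw [sum_comm, sum_congr rfl fun U _ => hshift U, sum_comm]
  refine sum_congr rfl fun V _ => ?_
  rw [← filter_filter, mul_sum, eq_comm, sum_filter]
  refine sum_congr rfl fun U _ => ?_
  simp only [hwt, mul_comm (G V)]

section Posterior

variable {q : ℕ} [NeZero q] {I J : Type*} [Fintype I] [Fintype J] [DecidableEq I] [DecidableEq J]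

lemma indicator_eq_sum_fourierDensity_unifOn (B : Finset (J → ZMod q)) (Z : J → ZMod q) :
    (if Z ∈ B then (1 : ℂ) else 0) = ((B.card / Fintype.card (J → ZMod q) : ℝ) : ℂ) *
      ∑ U, fourierDensity (unifOn B) U * ZMod.stdAddChar (U ⬝ᵥ Z) := by
  rw [← densityFn_eq_sum_fourierDensity, densityFn, unifOn]
  have hcard : (Fintype.card (J → ZMod q) : ℂ) ≠ 0 := Nat.cast_ne_zero.mpr Fintype.card_ne_zero
  split_ifs with hZ
  · have hB : (B.card : ℂ) ≠ 0 := Nat.cast_ne_zero.mpr (card_ne_zero_of_mem hZ)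
    push_cast
    field_simp
  · simp

variable {e : J → I}

lemma fourierDensity_posterior (he : Injective e) (D : (I → ZMod q) → ℝ)
    (N : (J → ZMod q) → ℝ) (B : Finset (J → ZMod q)) (W : I → ZMod q) :
    fourierDensity (fun X => D X * ∑ Z, if X ∘ e - Z ∈ B then N Z else 0) W
      = ((B.card / Fintype.card (J → ZMod q) : ℝ) : ℂ) * ∑ U,
          fourierDensity (unifOn B) U * fourierDensity N U *
            fourierDensity D (W - extend e U 0) := by
  set c : ℂ := ((B.card / Fintype.card (J → ZMod q) : ℝ) : ℂ)
  set g : (I → ZMod q) → (J → ZMod q) → (J → ZMod q) → ℂ := fun X Z U =>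
    fourierDensity (unifOn B) U * ((N Z : ℂ) * ZMod.stdAddChar (-(U ⬝ᵥ Z))) *
      ((D X : ℂ) * ZMod.stdAddChar (-((W - extend e U 0) ⬝ᵥ X)))
  have hterm : ∀ X Z, (D X * N Z * (if X ∘ e - Z ∈ B then 1 else 0) : ℂ) *
      ZMod.stdAddChar (-(W ⬝ᵥ X)) = c * ∑ U, g X Z U := by
    intro X Z
    rw [indicator_eq_sum_fourierDensity_unifOn, mul_sum, mul_sum, mul_sum, sum_mul]
    refine sum_congr rfl fun U _ => ?_
    linear_combination (c * fourierDensity (unifOn B) U * D X * N Z) *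
      stdAddChar_projection_mul he U Z W X
  calc fourierDensity (fun X => D X * ∑ Z, if X ∘ e - Z ∈ B then N Z else 0) W
      = ∑ X, ∑ Z, (D X * N Z * (if X ∘ e - Z ∈ B then 1 else 0) : ℂ) *
          ZMod.stdAddChar (-(W ⬝ᵥ X)) := by
        rw [fourierDensity_eq_sum]
        refine sum_congr rfl fun X _ => ?_
        push_cast
        rw [mul_sum, sum_mul]
        refine sum_congr rfl fun Z _ => ?_
        split_ifs <;> simp
    _ = c * ∑ X, ∑ Z, ∑ U, g X Z U := by simp_rw [hterm, ← mul_sum]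
    _ = c * ∑ U, ∑ Z, ∑ X, g X Z U := by
        rw [sum_congr rfl fun X _ => sum_comm, sum_comm]
        exact congrArg _ (sum_congr rfl fun U _ => sum_comm)
    _ = _ := by
        congr 1
        refine sum_congr rfl fun U _ => ?_
        rw [fourierDensity_eq_sum N, fourierDensity_eq_sum D, mul_assoc, sum_mul_sum, mul_sum]
        simp_rw [mul_sum, g, mul_assoc]

end Posterior

section Hypermatching

variable {q m k n k' : ℕ}

def phmIndex (φ : Fin k → Fin k') (M : Fin m → Fin k → Fin n) : Fin m × Fin k → Fin n × Fin k' :=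
  fun p => (M p.1 p.2, φ p.2)

lemma phmIndex_injective {φ : Fin k → Fin k'} (hφ : Injective φ) {M : Fin m → Fin k → Fin n}
    (hM : M ∈ PHMset m k n) : Injective (phmIndex φ M) := by
  rintro ⟨j₁, ℓ₁⟩ ⟨j₂, ℓ₂⟩ h
  obtain ⟨hj, hℓ⟩ := Prod.mk.inj h
  obtain rfl := hφ hℓ
  obtain rfl := (mem_filter.mp hM).2 ℓ₁ hj
  rfl

variable [NeZero q] {D : (Fin n × Fin k' → ZMod q) → ℝ} {φ : Fin k → Fin k'}
  {Y : (Fin k → ZMod q) → ℝ} {M : Fin m → Fin k → Fin n} {B : Finset (Fin m × Fin k → ZMod q)}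

lemma norm_fourierDensity_postDist_le (hφ : Injective φ) (hM : M ∈ PHMset m k n)
    (hY : IsDist Y) (hY1 : OneWise Y) (hp : 0 < pSucc D Y φ M B) (W : Fin n × Fin k' → ZMod q) :
    ‖fourierDensity (postDist D Y φ M B) W‖
      ≤ (((B.card : ℝ) / (q : ℝ) ^ (m * k)) / pSucc D Y φ M B) *
          ∑ U ∈ univ.filter SingletonFree,
            ‖fourierDensity (unifOn B) U‖ * ‖fourierDensity D (W - extend (phmIndex φ M) U 0)‖ := by
  have hcard : (Fintype.card (Fin m × Fin k → ZMod q) : ℝ) = (q : ℝ) ^ (m * k) := by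
    simp [ZMod.card]
  have hsum : ‖∑ U, fourierDensity (unifOn B) U * fourierDensity (prodRows Y) U *
        fourierDensity D (W - extend (phmIndex φ M) U 0)‖
      ≤ ∑ U ∈ univ.filter SingletonFree,
          ‖fourierDensity (unifOn B) U‖ * ‖fourierDensity D (W - extend (phmIndex φ M) U 0)‖ := by
    rw [← sum_filter_of_ne fun U _ hU => by_contra fun hSF => hU (by
      rw [fourierDensity_prodRows_eq_zero hY1 hSF, mul_zero, zero_mul])]
    refine (norm_sum_le _ _).trans (sum_le_sum fun U _ => ?_)
    rw [norm_mul, norm_mul]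
    gcongr
    exact mul_le_of_le_one_right (norm_nonneg _) (norm_fourierDensity_prodRows_le_one hY U)
  change ‖fourierDensity (fun X => (D X * ∑ Z, if X ∘ phmIndex φ M - Z ∈ B then prodRows Y Z
    else 0) / pSucc D Y φ M B) W‖ ≤ _
  rw [fourierDensity_div_const, fourierDensity_posterior (phmIndex_injective hφ hM), norm_div,
    norm_mul, Complex.norm_real, Complex.norm_real, Real.norm_of_nonneg hp.le,
    Real.norm_of_nonneg (by positivity), hcard, mul_div_right_comm]
  gcongr

end Hypermatching

theorem posterior_level_mass_bound_general
    (q : ℕ) [NeZero q] (n m k k' : ℕ)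
    (D : (Fin n × Fin k' → ZMod q) → ℝ)
    (φ : Fin k → Fin k') (hφ : Function.Injective φ)
    (Y : (Fin k → ZMod q) → ℝ) (hY : IsDist Y) (hY1 : OneWise Y)
    (M : Fin m → Fin k → Fin n) (hM : M ∈ PHMset m k n)
    (B : Finset (Fin m × Fin k → ZMod q))
    (hp : 0 < pSucc D Y φ M B) :
    ∀ h : ℕ,
      ∑ W ∈ (univ : Finset (Fin n × Fin k' → ZMod q)).filter (fun W => wt W = h),
          ‖fourierDensity (postDist D Y φ M B) W‖
        ≤ (((B.card : ℝ) / (q : ℝ) ^ (m * k)) / pSucc D Y φ M B) *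
            ∑ V : Fin n × Fin k' → ZMod q,
              ‖fourierDensity D V‖ *
                ∑ U ∈ (univ : Finset (Fin m × Fin k → ZMod q)).filter
                    (fun U => SingletonFree U ∧
                      ((wt (U + projMap φ M V) : ℤ)
                        = (h : ℤ) - ((wt V : ℤ) - (wt (projMap φ M V) : ℤ)))),
                  ‖fourierDensity (unifOn B) U‖ := by
  intro h
  calc _ ≤ ∑ W ∈ univ.filter (fun W : Fin n × Fin k' → ZMod q => wt W = h),
          ((B.card : ℝ) / (q : ℝ) ^ (m * k) / pSucc D Y φ M B) *
            ∑ U ∈ univ.filter SingletonFree, ‖fourierDensity (unifOn B) U‖ *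
              ‖fourierDensity D (W - extend (phmIndex φ M) U 0)‖ :=
        sum_le_sum fun W _ => norm_fourierDensity_postDist_le hφ hM hY hY1 hp W
    _ = _ := by
        rw [← mul_sum]
        exact congrArg _ (sum_wt_eq_sum_mul_sub_extend_zero (phmIndex_injective hφ hM)
          SingletonFree (fun U => ‖fourierDensity (unifOn B) U‖) (fun V => ‖fourierDensity D V‖) h)

/-- Level-`h` Fourier 1-mass of the posterior density is controlled by
the Fourier coefficients of `μ_D` and `μ_B` over singleton-free shifts. -/
theorem posterior_level_mass_bound
    (q : ℕ) [NeZero q] (hq : 2 ≤ q) (n m k k' : ℕ) (hkk' : k ≤ k')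
    (D : (Fin n × Fin k' → ZMod q) → ℝ) (hD : IsDist D)
    (φ : Fin k → Fin k') (hφ : Function.Injective φ)
    (Y : (Fin k → ZMod q) → ℝ) (hY : IsDist Y) (hY1 : OneWise Y)
    (M : Fin m → Fin k → Fin n) (hM : M ∈ PHMset m k n)
    (B : Finset (Fin m × Fin k → ZMod q))
    (hp : 0 < pSucc D Y φ M B) :
    ∀ h : ℕ,
      ∑ W ∈ (univ : Finset (Fin n × Fin k' → ZMod q)).filter (fun W => wt W = h),
          ‖fourierDensity (postDist D Y φ M B) W‖
        ≤ (((B.card : ℝ) / (q : ℝ) ^ (m * k)) / pSucc D Y φ M B) *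
            ∑ V : Fin n × Fin k' → ZMod q,
              ‖fourierDensity D V‖ *
                ∑ U ∈ (univ : Finset (Fin m × Fin k → ZMod q)).filter
                    (fun U => SingletonFree U ∧
                      ((wt (U + projMap φ M V) : ℤ)
                        = (h : ℤ) - ((wt V : ℤ) - (wt (projMap φ M V) : ℤ)))),
                  ‖fourierDensity (unifOn B) U‖ :=
  posterior_level_mass_bound_general q n m k k' D φ hφ Y hY hY1 M hM B hp

end
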